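/- For z > 0, K_1(z) = (1/2)∫_0^∞ exp(−(z/2)(t + 1/t)) dt satisfies K_1(z) ≤ √(π/(2z)) e^{−z} (1 + 3/(8z)). -/

import Mathlib

/-!
Substitute `t = a ^ 2` and `s = a - a⁻¹` (`a > 0`): then `t + 1 / t = s ^ 2 + 2` and
`dt = J s ds` with `J s = 2 a ^ 3 / (a ^ 2 + 1)`, so `2 K₁(z) = e^{-z} ∫ e^{-z s ^ 2 / 2} J s ds`
over `ℝ`. Since `s ↦ -s` corresponds to `a ↦ a⁻¹`, one gets `J s + J (-s) ≤ 2 + 3 s ^ 2 / 4`, the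
slack being `(a - 1) ^ 4 (3 a ^ 2 + 4 a + 3) / (4 a ^ 2 (a ^ 2 + 1))`. Symmetrizing the integral,
the bound follows from the Gaussian moments `∫ e^{-b s ^ 2} = √(π / b)` and
`∫ s ^ 2 e^{-b s ^ 2} = √(π / b) / (2 b)`.
-/

open Real

noncomputable def besselK (ν z x : ℝ) : ℝ :=
  (1 / 2) * ∫ t in Set.Ioi x, t ^ (ν - 1) * Real.exp (-(z / 2) * (t + 1 / t))

open MeasureTheory Set

lemma integrable_sq_mul_exp_neg_mul_sq {b : ℝ} (hb : 0 < b) :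
    Integrable fun x : ℝ => x ^ 2 * exp (-b * x ^ 2) := by
  simpa only [rpow_two] using integrable_rpow_mul_exp_neg_mul_sq hb (by norm_num : (-1 : ℝ) < 2)

lemma integral_sq_mul_exp_neg_mul_sq {b : ℝ} (hb : 0 < b) :
    ∫ x, x ^ 2 * exp (-b * x ^ 2) = √(π / b) / (2 * b) := by
  have hIoi := integral_rpow_mul_exp_neg_mul_rpow two_pos (by norm_num : (-1 : ℝ) < 2) hb
  have hGamma : Gamma ((2 + 1) / 2) = √π / 2 := by
    rw [show ((2 : ℝ) + 1) / 2 = 1 / 2 + 1 by norm_num, Gamma_add_one (by norm_num),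
      Gamma_one_half_eq]
    ring
  have hpow : b ^ (-((2 : ℝ) + 1) / 2) = (b * √b)⁻¹ := by
    rw [show -((2 : ℝ) + 1) / 2 = -(1 + 1 / 2) by norm_num, rpow_neg hb.le, rpow_add hb,
      rpow_one, sqrt_eq_rpow]
  simp only [rpow_two] at hIoi
  have := sqrt_pos.2 hb
  have hsymm := integral_comp_abs (f := fun x => x ^ 2 * exp (-b * x ^ 2))
  simp only [sq_abs] at hsymm
  rw [hsymm, hIoi, hGamma, hpow, sqrt_div pi_pos.le]
  field_simp

lemma two_mul_integral_le_of_add_comp_neg_le {f g : ℝ → ℝ} (hf : Integrable f)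
    (hg : Integrable g) (h : ∀ x, f x + f (-x) ≤ g x) : 2 * ∫ x, f x ≤ ∫ x, g x := by
  calc 2 * ∫ x, f x = ∫ x, (f x + f (-x)) := by
        rw [integral_add hf hf.comp_neg, integral_neg_eq_self, two_mul]
    _ ≤ ∫ x, g x := integral_mono (hf.add hf.comp_neg) hg h

namespace BesselK

/-- The positive solution `a` of `a - a⁻¹ = s`. -/
noncomputable def root (s : ℝ) : ℝ := (s + √(s ^ 2 + 4)) / 2

lemma root_pos (s : ℝ) : 0 < root s := by
  have : |s| < √(s ^ 2 + 4) := by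
    rw [← sqrt_sq_eq_abs]
    exact sqrt_lt_sqrt (sq_nonneg s) (by linarith)
  unfold root
  linarith [neg_le_abs s]

lemma root_sub_inv (s : ℝ) : root s - (root s)⁻¹ = s := by
  have h : √(s ^ 2 + 4) ^ 2 = s ^ 2 + 4 := sq_sqrt (by positivity)
  have := (root_pos s).ne'
  field_simp
  unfold root
  linear_combination h / 4

lemma root_sub_inv_of_pos {a : ℝ} (ha : 0 < a) : root (a - a⁻¹) = a := by
  have h : (a - a⁻¹) ^ 2 + 4 = (a + a⁻¹) ^ 2 := by
    field_simp
    ring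
  unfold root
  rw [h, sqrt_sq (by positivity)]
  ring

lemma continuous_root : Continuous root := by
  unfold root
  fun_prop

/-- The derivative of `s ↦ root s ^ 2`. -/
noncomputable def jacobian (s : ℝ) : ℝ := 2 * root s ^ 3 / (root s ^ 2 + 1)

lemma jacobian_nonneg (s : ℝ) : 0 ≤ jacobian s := by
  have := root_pos s
  unfold jacobian
  positivity

lemma continuous_jacobian : Continuous jacobian :=
  (continuous_const.mul (continuous_root.pow 3)).div ((continuous_root.pow 2).add continuous_const)
    fun s => by positivity

lemma jacobian_add_jacobian_neg_le (s : ℝ) : jacobian s + jacobian (-s) ≤ 2 + 3 / 4 * s ^ 2 := by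
  obtain ⟨a, ha, rfl⟩ : ∃ a, 0 < a ∧ a - a⁻¹ = s := ⟨root s, root_pos s, root_sub_inv s⟩
  have hneg : -(a - a⁻¹) = a⁻¹ - a⁻¹⁻¹ := by rw [inv_inv]; ring
  rw [jacobian, jacobian, hneg, root_sub_inv_of_pos ha, root_sub_inv_of_pos (inv_pos.2 ha)]
  rw [← sub_nonneg]
  have hslack : 2 + 3 / 4 * (a - a⁻¹) ^ 2 - (2 * a ^ 3 / (a ^ 2 + 1) + 2 * a⁻¹ ^ 3 / (a⁻¹ ^ 2 + 1)) =
      (a - 1) ^ 4 * (3 * a ^ 2 + 4 * a + 3) / (4 * a ^ 2 * (a ^ 2 + 1)) := by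
    field_simp
    ring
  rw [hslack]
  positivity

lemma jacobian_le (s : ℝ) : jacobian s ≤ 2 + 3 / 4 * s ^ 2 := by
  linarith [jacobian_add_jacobian_neg_le s, jacobian_nonneg (-s)]

noncomputable def sqrtSubInv (t : ℝ) : ℝ := √t - (√t)⁻¹

lemma hasDerivAt_sqrtSubInv {t : ℝ} (ht : 0 < t) :
    HasDerivAt sqrtSubInv ((t + 1) / (2 * t * √t)) t := by
  have hst : 0 < √t := sqrt_pos.2 ht
  have hsqrt := hasDerivAt_sqrt ht.ne'
  refine (hsqrt.sub (hsqrt.inv hst.ne')).congr_deriv ?_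
  rw [sq_sqrt ht.le]
  field_simp
  ring

lemma root_sqrtSubInv {t : ℝ} (ht : 0 < t) : root (sqrtSubInv t) = √t :=
  root_sub_inv_of_pos (sqrt_pos.2 ht)

lemma injOn_sqrtSubInv : InjOn sqrtSubInv (Ioi 0) := by
  intro t ht u hu h
  have : √t = √u := by rw [← root_sqrtSubInv ht, ← root_sqrtSubInv hu, h]
  exact (sqrt_inj (le_of_lt ht) (le_of_lt hu)).1 this

lemma image_sqrtSubInv : sqrtSubInv '' Ioi 0 = univ := by
  refine eq_univ_of_forall fun s => ⟨root s ^ 2, pow_pos (root_pos s) 2, ?_⟩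
  rw [sqrtSubInv, sqrt_sq (root_pos s).le, root_sub_inv]

lemma sqrtSubInv_sq_add_two {t : ℝ} (ht : 0 < t) : sqrtSubInv t ^ 2 + 2 = t + 1 / t := by
  have := sqrt_pos.2 ht
  rw [sqrtSubInv, sub_sq, inv_pow, sq_sqrt ht.le]
  field_simp
  ring

lemma jacobian_sqrtSubInv {t : ℝ} (ht : 0 < t) :
    jacobian (sqrtSubInv t) = 2 * t * √t / (t + 1) := by
  rw [jacobian, root_sqrtSubInv ht, pow_succ, sq_sqrt ht.le, mul_assoc]

theorem integral_Ioi_comp_add_inv (f : ℝ → ℝ) :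
    ∫ t in Ioi 0, f (t + 1 / t) = ∫ s, f (s ^ 2 + 2) * jacobian s := by
  have h := integral_image_eq_integral_abs_deriv_smul measurableSet_Ioi
    (fun t ht => (hasDerivAt_sqrtSubInv ht).hasDerivWithinAt) injOn_sqrtSubInv
    (fun s => f (s ^ 2 + 2) * jacobian s)
  rw [image_sqrtSubInv, Measure.restrict_univ] at h
  rw [h]
  refine setIntegral_congr_fun measurableSet_Ioi fun t (ht : 0 < t) => ?_
  have := sqrt_pos.2 ht
  rw [sqrtSubInv_sq_add_two ht, jacobian_sqrtSubInv ht, abs_of_pos (by positivity), smul_eq_mul]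
  field_simp

theorem integral_exp_neg_mul_add_inv_le {b : ℝ} (hb : 0 < b) :
    ∫ t in Ioi 0, exp (-b * (t + 1 / t)) ≤ √(π / b) * exp (-(2 * b)) * (1 + 3 / (16 * b)) := by
  set G : ℝ → ℝ := fun s => exp (-(2 * b)) * exp (-b * s ^ 2) * jacobian s
  set B : ℝ → ℝ := fun s => exp (-(2 * b)) * exp (-b * s ^ 2) * (2 + 3 / 4 * s ^ 2)
  have hBeq : B = fun s =>
      exp (-(2 * b)) * (2 * exp (-b * s ^ 2) + 3 / 4 * (s ^ 2 * exp (-b * s ^ 2))) := by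
    ext s
    ring
  have hBint : Integrable B := by
    rw [hBeq]
    exact (((integrable_exp_neg_mul_sq hb).const_mul 2).add
      ((integrable_sq_mul_exp_neg_mul_sq hb).const_mul _)).const_mul _
  have hGint : Integrable G := by
    have hcont : Continuous G := by
      have := continuous_jacobian
      fun_prop
    refine hBint.mono' hcont.aestronglyMeasurable (Filter.Eventually.of_forall fun s => ?_)
    rw [norm_of_nonneg (by have := jacobian_nonneg s; positivity)]
    simp only [G, B]
    gcongr
    exact jacobian_le s
  have hGB (s : ℝ) : G s + G (-s) ≤ B s := by
    have hsum : G s + G (-s) =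
        exp (-(2 * b)) * exp (-b * s ^ 2) * (jacobian s + jacobian (-s)) := by
      simp only [G, neg_sq]
      ring
    rw [hsum]
    exact mul_le_mul_of_nonneg_left (jacobian_add_jacobian_neg_le s) (by positivity)
  have hsubst : ∫ t in Ioi 0, exp (-b * (t + 1 / t)) = ∫ s, G s := by
    rw [integral_Ioi_comp_add_inv (fun u => exp (-b * u))]
    congr 1 with s
    rw [show -b * (s ^ 2 + 2) = -(2 * b) + -b * s ^ 2 by ring, exp_add]
  have hBval : ∫ s, B s = 2 * (√(π / b) * exp (-(2 * b)) * (1 + 3 / (16 * b))) := by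
    rw [hBeq, integral_const_mul, integral_add ((integrable_exp_neg_mul_sq hb).const_mul 2)
      ((integrable_sq_mul_exp_neg_mul_sq hb).const_mul _), integral_const_mul, integral_const_mul,
      integral_gaussian, integral_sq_mul_exp_neg_mul_sq hb]
    field_simp
    ring
  have := two_mul_integral_le_of_add_comp_neg_le hGint hBint hGB
  rw [hsubst]
  linarith

end BesselK

theorem besselK_one_bound (z : ℝ) (hz : 0 < z) :
    besselK 1 z 0 ≤ Real.sqrt (π / (2 * z)) * Real.exp (-z) * (1 + 3 / (8 * z)) := by
  have hK : besselK 1 z 0 = 1 / 2 * ∫ t in Ioi 0, exp (-(z / 2) * (t + 1 / t)) := by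
    simp only [besselK, sub_self, rpow_zero, one_mul]
  have hsqrt : √(π / (z / 2)) = 2 * √(π / (2 * z)) := by
    rw [show π / (z / 2) = 2 ^ 2 * (π / (2 * z)) by field_simp, sqrt_mul (by positivity),
      sqrt_sq zero_le_two]
  have hbound := BesselK.integral_exp_neg_mul_add_inv_le (half_pos hz)
  rw [hsqrt, show 2 * (z / 2) = z by ring, show 16 * (z / 2) = 8 * z by ring] at hbound
  rw [hK]
  linarith
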